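/- arXiv:1702.07936 — 4 statements merged into one kernel-verified Lean document; each statement's English description precedes it below -/
import Mathlib

section
/- Fix $n, m \in \mathbb{N}$, a price vector $q \in \mathbb{R}^m_{++}$, endowments $x_i \in \mathbb{R}^m_+$, liability vectors $\bar p_i \in \mathbb{R}^m_+$, and relative liability matrices $A^k \in \mathbb{R}^{n\times n}_+$ with $\sum_{j=1}^n a_{ij}^k = 1$ for all $i,k$. Suppose $y^\uparrow, y^\downarrow \in \mathbb{R}^{n\times m}_+$ both satisfy the budget-balance equations $q^\mathsf{T} y_i = q^\mathsf{T} x_i + \sum_{k=1}^m q_k \sum_{j=1}^n a_{ji}^k (\bar p_j^k \wedge y_j^k)$ for all $i$, and $y^\uparrow \ge y^\downarrow$ componentwise. Then $\sum_{i=1}^n q^\mathsf{T}(y_i^\uparrow - \bar p_i)^+ = \sum_{i=1}^n q^\mathsf{T}(y_i^\downarrow - \bar p_i)^+$, and consequently $(y_i^\uparrow - \bar p_i)^+ = (y_i^\downarrow - \bar p_i)^+$ componentwise for every firm $i$. -/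
/-! Summing the budget-balance equations over all firms, every interbank payment is counted
once as paid and, because the rows of each `A^k` sum to one, once as received. Since
`(y - p)⁺ = y - p ∧ y`, the aggregate positive equity therefore equals the aggregate endowment
value for every clearing solution. Positive equity is monotone in `y` and `q ≫ 0`, so for
`y↓ ≤ y↑` equality of the aggregates forces equality firm by firm and asset by asset. -/

open Finset

variable {R ι κ : Type*} [Fintype ι] [Fintype κ]

/-- `a k j i` is the fraction of firm `j`'s liability in asset `k` that is owed to firm `i`. -/
def IsBudgetBalanced [CommRing R] [LinearOrder R] (q : κ → R) (x pbar : ι → κ → R)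
    (a : κ → ι → ι → R) (y : ι → κ → R) : Prop :=
  ∀ i, ∑ k, q k * y i k = ∑ k, q k * x i k + ∑ k, q k * ∑ j, a k j i * min (pbar j k) (y j k)

lemma sum_received_eq_sum_paid [CommRing R] (q : κ → R) {a : κ → ι → ι → R}
    (hrow : ∀ k j, ∑ i, a k j i = 1) (f : ι → κ → R) :
    ∑ i, ∑ k, q k * ∑ j, a k j i * f j k = ∑ j, ∑ k, q k * f j k :=
  calc ∑ i, ∑ k, q k * ∑ j, a k j i * f j k
      = ∑ k, q k * ∑ j, (∑ i, a k j i) * f j k := by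
        simp_rw [sum_mul, mul_sum]
        rw [sum_comm]
        exact sum_congr rfl fun k _ => sum_comm
    _ = ∑ j, ∑ k, q k * f j k := by
        simp_rw [hrow, one_mul, mul_sum]
        exact sum_comm

lemma max_sub_zero_eq_sub_min [AddCommGroup R] [LinearOrder R] [IsOrderedAddMonoid R]
    (y p : R) : max (y - p) 0 = y - min p y := by
  rcases le_total p y with h | h <;> simp [h]

lemma IsBudgetBalanced.sum_posPart_eq_sum_endowment [CommRing R] [LinearOrder R]
    [IsOrderedRing R] {q : κ → R} {x pbar : ι → κ → R} {a : κ → ι → ι → R} {y : ι → κ → R}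
    (hy : IsBudgetBalanced q x pbar a y) (hrow : ∀ k j, ∑ i, a k j i = 1) :
    ∑ i, ∑ k, q k * max (y i k - pbar i k) 0 = ∑ i, ∑ k, q k * x i k := by
  have hvalue : ∑ i, ∑ k, q k * y i k =
      ∑ i, ∑ k, q k * x i k + ∑ i, ∑ k, q k * min (pbar i k) (y i k) := by
    rw [sum_congr rfl fun i _ => hy i, sum_add_distrib, sum_received_eq_sum_paid q hrow]
  simp_rw [max_sub_zero_eq_sub_min, mul_sub, sum_sub_distrib, hvalue, add_sub_cancel_right]

lemma posPart_eq_of_le_of_sum_eq [CommRing R] [LinearOrder R] [IsStrictOrderedRing R]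
    {q : κ → R} (hq : ∀ k, 0 < q k) {pbar y y' : ι → κ → R} (hle : ∀ i k, y' i k ≤ y i k)
    (hsum : ∑ i, ∑ k, q k * max (y i k - pbar i k) 0 =
      ∑ i, ∑ k, q k * max (y' i k - pbar i k) 0) (i : ι) (k : κ) :
    max (y i k - pbar i k) 0 = max (y' i k - pbar i k) 0 := by
  have hmono : ∀ i k, q k * max (y' i k - pbar i k) 0 ≤ q k * max (y i k - pbar i k) 0 :=
    fun i k => mul_le_mul_of_nonneg_left
      (max_le_max_right 0 (sub_le_sub_right (hle i k) _)) (hq k).le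
  rw [← Fintype.sum_prod_type', ← Fintype.sum_prod_type', eq_comm,
    sum_eq_sum_iff_of_le fun ik _ => hmono ik.1 ik.2] at hsum
  exact (mul_left_cancel₀ (hq k).ne' (hsum (i, k) (mem_univ _))).symm

theorem stmt_1_general (n m : ℕ) (q : Fin m → ℝ) (hq : ∀ k, 0 < q k)
    (x : Fin n → Fin m → ℝ)
    (pbar : Fin n → Fin m → ℝ)
    (a : Fin m → Fin n → Fin n → ℝ)
    (hrow : ∀ k i, ∑ j, a k i j = 1)
    (yup ydown : Fin n → Fin m → ℝ)
    (hbup : ∀ i, ∑ k, q k * yup i k =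
      ∑ k, q k * x i k + ∑ k, q k * ∑ j, a k j i * min (pbar j k) (yup j k))
    (hbdown : ∀ i, ∑ k, q k * ydown i k =
      ∑ k, q k * x i k + ∑ k, q k * ∑ j, a k j i * min (pbar j k) (ydown j k))
    (hle : ∀ i k, ydown i k ≤ yup i k) :
    (∑ i, ∑ k, q k * max (yup i k - pbar i k) 0) =
      (∑ i, ∑ k, q k * max (ydown i k - pbar i k) 0) ∧
    ∀ i k, max (yup i k - pbar i k) 0 = max (ydown i k - pbar i k) 0 := by
  have hagg : (∑ i, ∑ k, q k * max (yup i k - pbar i k) 0) =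
      ∑ i, ∑ k, q k * max (ydown i k - pbar i k) 0 :=
    (IsBudgetBalanced.sum_posPart_eq_sum_endowment hbup hrow).trans
      (IsBudgetBalanced.sum_posPart_eq_sum_endowment hbdown hrow).symm
  exact ⟨hagg, posPart_eq_of_le_of_sum_eq hq hle hagg⟩

/-- Conservation of value (Lemma 3.1(2)): if `yup ≥ ydown` both satisfy the
budget-balance equations under price `q ≫ 0`, then the aggregate and componentwise
positive equities coincide. -/
theorem stmt_1 (n m : ℕ) (q : Fin m → ℝ) (hq : ∀ k, 0 < q k)
    (x : Fin n → Fin m → ℝ) (hx : ∀ i k, 0 ≤ x i k)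
    (pbar : Fin n → Fin m → ℝ) (hpbar : ∀ i k, 0 ≤ pbar i k)
    (a : Fin m → Fin n → Fin n → ℝ) (ha : ∀ k i j, 0 ≤ a k i j)
    (hrow : ∀ k i, ∑ j, a k i j = 1)
    (yup ydown : Fin n → Fin m → ℝ)
    (hyup : ∀ i k, 0 ≤ yup i k) (hydown : ∀ i k, 0 ≤ ydown i k)
    (hbup : ∀ i, ∑ k, q k * yup i k =
      ∑ k, q k * x i k + ∑ k, q k * ∑ j, a k j i * min (pbar j k) (yup j k))
    (hbdown : ∀ i, ∑ k, q k * ydown i k =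
      ∑ k, q k * x i k + ∑ k, q k * ∑ j, a k j i * min (pbar j k) (ydown j k))
    (hle : ∀ i k, ydown i k ≤ yup i k) :
    (∑ i, ∑ k, q k * max (yup i k - pbar i k) 0) =
      (∑ i, ∑ k, q k * max (ydown i k - pbar i k) 0) ∧
    ∀ i k, max (yup i k - pbar i k) 0 = max (ydown i k - pbar i k) 0 :=
  stmt_1_general n m q hq x pbar a hrow yup ydown hbup hbdown hle
end

section
/- Consider the $n+1$ node system (firms $1,\dots,n$ plus a societal node $0$ with no obligations into the network, i.e., $L_{0i}^k = 0$ for all $i,k$) where $L_{i0}^k > 0$ for every firm $i$ and asset $k$. Suppose $y^\uparrow \ge y^\downarrow$ are the greatest and least clearing holdings at price $q \in \mathbb{R}^m_{++}$, and suppose $(y_i^\uparrow - \bar p_i)^+ = (y_i^\downarrow - \bar p_i)^+$ for all firms $i$ (equal positive equity). Then $y^\uparrow = y^\downarrow$, i.e., the clearing holdings are unique. -/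
/-! The societal node `0` owes nothing, so its equity is its whole holding and equal equity
forces it to hold the same under both solutions. Its budget then says that the weighted
payments it receives agree; since `y↓ ≤ y↑` every payment `p̄ ∧ y` can only grow, and
positive prices and weights `a_{i0}` force each payment to be the same. A holding is its
payment plus its equity, so the two solutions coincide. -/

open Finset

theorem eq_of_min_eq_of_max_sub_eq {α : Type*} [AddCommGroup α] [LinearOrder α]
    [IsOrderedAddMonoid α] (p : α) {y y' : α} (hmin : min p y = min p y')
    (hmax : max (y - p) 0 = max (y' - p) 0) : y = y' := by
  have decomp (z : α) : min p z + max (z - p) 0 = z := by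
    rcases le_total z p with h | h
    · rw [min_eq_right h, max_eq_right (sub_nonpos.2 h), add_zero]
    · rw [min_eq_left h, max_eq_left (sub_nonneg.2 h), add_sub_cancel]
  rw [← decomp y, ← decomp y', hmin, hmax]

theorem eq_zero_of_sum_mul_sum_eq_zero {R ι κ : Type*} [CommRing R] [LinearOrder R]
    [IsStrictOrderedRing R] [Fintype ι] [Fintype κ] {q : κ → R} {f : κ → ι → R}
    (hq : ∀ k, 0 < q k) (hf : ∀ k j, 0 ≤ f k j) (h : ∑ k, q k * ∑ j, f k j = 0)
    (k : κ) (j : ι) : f k j = 0 := by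
  have hinner : ∑ j, f k j = 0 := by
    have hterm := (sum_eq_zero_iff_of_nonneg fun k _ =>
      mul_nonneg (hq k).le (sum_nonneg fun j _ => hf k j)).1 h k (mem_univ k)
    exact (mul_eq_zero.1 hterm).resolve_left (hq k).ne'
  exact (sum_eq_zero_iff_of_nonneg fun j _ => hf k j).1 hinner j (mem_univ j)

theorem stmt_3_general (n m : ℕ) (q : Fin m → ℝ) (hq : ∀ k, 0 < q k)
    (x : Fin (n+1) → Fin m → ℝ)
    (pbar : Fin (n+1) → Fin m → ℝ)
    (hpbar0 : ∀ k, pbar 0 k = 0)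
    (a : Fin m → Fin (n+1) → Fin (n+1) → ℝ) (ha : ∀ k i j, 0 ≤ a k i j)
    (ha0 : ∀ (k : Fin m) (i : Fin (n+1)), i ≠ 0 → 0 < a k i 0)
    (yup ydown : Fin (n+1) → Fin m → ℝ)
    (hyup : ∀ i k, 0 ≤ yup i k) (hydown : ∀ i k, 0 ≤ ydown i k)
    (hbup : ∀ i, ∑ k, q k * yup i k =
      ∑ k, q k * x i k + ∑ k, q k * ∑ j, a k j i * min (pbar j k) (yup j k))
    (hbdown : ∀ i, ∑ k, q k * ydown i k =
      ∑ k, q k * x i k + ∑ k, q k * ∑ j, a k j i * min (pbar j k) (ydown j k))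
    (hle : ∀ i k, ydown i k ≤ yup i k)
    (heq : ∀ i k, max (yup i k - pbar i k) 0 = max (ydown i k - pbar i k) 0) :
    yup = ydown := by
  have hsink (k : Fin m) : yup 0 k = ydown 0 k := by
    simpa [hpbar0, max_eq_left (hyup 0 k), max_eq_left (hydown 0 k)] using heq 0 k
  have hpaid : ∑ k, q k * ∑ j, a k j 0 *
      (min (pbar j k) (yup j k) - min (pbar j k) (ydown j k)) = 0 := by
    have hheld : ∑ k, q k * yup 0 k = ∑ k, q k * ydown 0 k := by simp only [hsink]
    simp only [mul_sub, sum_sub_distrib]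
    linarith [hbup 0, hbdown 0]
  funext i k
  rcases eq_or_ne i 0 with rfl | hi
  · exact hsink k
  refine eq_of_min_eq_of_max_sub_eq (pbar i k) ?_ (heq i k)
  have hterm := eq_zero_of_sum_mul_sum_eq_zero hq
    (fun k j => mul_nonneg (ha k j 0) (sub_nonneg.2 (min_le_min_left _ (hle j k)))) hpaid k i
  exact sub_eq_zero.1 ((mul_eq_zero.1 hterm).resolve_left (ha0 k i hi).ne')

/-- Uniqueness of clearing holdings (Corollary 3.2): with a societal sink node `0`
(no obligations into the network, but every firm owes it a positive amount in every
asset), two ordered clearing solutions with equal positive equity must coincide. -/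
theorem stmt_3 (n m : ℕ) (q : Fin m → ℝ) (hq : ∀ k, 0 < q k)
    (x : Fin (n+1) → Fin m → ℝ) (hx : ∀ i k, 0 ≤ x i k)
    (pbar : Fin (n+1) → Fin m → ℝ) (hpbar : ∀ i k, 0 ≤ pbar i k)
    (hpbar0 : ∀ k, pbar 0 k = 0)
    (a : Fin m → Fin (n+1) → Fin (n+1) → ℝ) (ha : ∀ k i j, 0 ≤ a k i j)
    (hrow : ∀ k i, ∑ j, a k i j = 1)
    (ha0 : ∀ (k : Fin m) (i : Fin (n+1)), i ≠ 0 → 0 < a k i 0)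
    (yup ydown : Fin (n+1) → Fin m → ℝ)
    (hyup : ∀ i k, 0 ≤ yup i k) (hydown : ∀ i k, 0 ≤ ydown i k)
    (hbup : ∀ i, ∑ k, q k * yup i k =
      ∑ k, q k * x i k + ∑ k, q k * ∑ j, a k j i * min (pbar j k) (yup j k))
    (hbdown : ∀ i, ∑ k, q k * ydown i k =
      ∑ k, q k * x i k + ∑ k, q k * ∑ j, a k j i * min (pbar j k) (ydown j k))
    (hle : ∀ i k, ydown i k ≤ yup i k)
    (heq : ∀ i k, max (yup i k - pbar i k) 0 = max (ydown i k - pbar i k) 0) :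
    yup = ydown :=
  stmt_3_general n m q hq x pbar hpbar0 a ha ha0 yup ydown hyup hydown hbup hbdown hle heq
end

section
/- Consider the two-bank, two-asset network where bank 1 has endowment $x_1 = (0,2)$ and owes $L_{12} = (1,0)$ to bank 2, and bank 2 has endowment $x_2 = (2,0)$ and owes $L_{21} = (0,1)$ to bank 1. Fix prices $q = (1, q_2)$ with $q_2 > 0$. Then the holdings $y_1^*(q) = (\min(1, 3q_2),\; (2 + \min(1, 3/q_2) - 1/q_2)^+)$ and $y_2^*(q) = ((2 + \min(1, 3q_2) - q_2)^+,\; \min(1, 3/q_2))$ satisfy the clearing conditions: (i) each bank's payment in each asset is the minimum of its liability and its holdings in that asset; (ii) budget balance: $q^\mathsf{T} y_i^* = q^\mathsf{T} x_i + q^\mathsf{T} (\bar p_j \wedge y_j^*)$ where $j \ne i$ and $\bar p_1 = (1,0)$, $\bar p_2 = (0,1)$; (iii) limited liability and absolute priority: if a bank's total value $q^\mathsf{T}(x_i + \bar p_j \wedge y_j^*)$ is at least $q^\mathsf{T}\bar p_i$ then $y_i^* \ge \bar p_i$. -/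
/-!
Write `a = min 1 (3 q₂)` and `b = min 1 (3 / q₂)`, so that `q₂ b = min q₂ 3`. Bank 1 is worth
`w₁ = q₂ (2 + b)` and bank 2 is worth `w₂ = 2 + a`, and the piecewise-linear identities
`min 1 w₁ = a` and `min q₂ w₂ = q₂ b` show that each bank holds the asset it owes up to the value
of its liability and the rest of its value in the other asset. Budget balance is then
`min t w + (w - t)⁺ = w`, and absolute priority says that the cap `min t w` equals `t` once `t ≤ w`.
-/

theorem min_add_max_sub_eq {α : Type*} [LinearOrder α] [AddCommGroup α] [IsOrderedAddMonoid α]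
    (t w : α) : min t w + max (w - t) 0 = w := by
  rcases le_total t w with h | h
  · rw [min_eq_left h, max_eq_left (sub_nonneg.mpr h), add_sub_cancel]
  · rw [min_eq_right h, max_eq_right (sub_nonpos.mpr h), add_zero]

theorem mul_min_one_div {q : ℝ} (hq : 0 < q) (r : ℝ) : q * min 1 (r / q) = min q r := by
  rw [mul_min_of_nonneg _ _ hq.le, mul_one, mul_div_cancel₀ r hq.ne']

theorem mul_max_sub_one_div {q : ℝ} (hq : 0 < q) (x : ℝ) :
    q * max (x - 1 / q) 0 = max (q * x - 1) 0 := by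
  rw [mul_max_of_nonneg _ _ hq.le, mul_sub, mul_one_div_cancel hq.ne', mul_zero]

theorem min_one_two_mul_add_min (q : ℝ) :
    min 1 (2 * q + min q 3) = min 1 (3 * q) := by
  simp only [min_def]
  split_ifs <;> linarith

theorem min_two_add_min_one {q : ℝ} (hq : 0 ≤ q) :
    min q (2 + min 1 (3 * q)) = min q 3 := by
  simp only [min_def]
  split_ifs <;> linarith

/-- Example 3.5: explicit clearing solution for the two-bank, two-asset network.
Bank 1: endowment (0,2), liability p̄₁ = (1,0) to bank 2.
Bank 2: endowment (2,0), liability p̄₂ = (0,1) to bank 1.  Prices q = (1, q₂). -/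
theorem stmt_4 (q2 : ℝ) (hq2 : 0 < q2) :
    let y11 := min 1 (3*q2)
    let y12 := max (2 + min 1 (3/q2) - 1/q2) 0
    let y21 := max (2 + min 1 (3*q2) - q2) 0
    let y22 := min 1 (3/q2)
    -- nonnegative holdings
    (0 ≤ y11 ∧ 0 ≤ y12 ∧ 0 ≤ y21 ∧ 0 ≤ y22) ∧
    -- (ii) budget balance: q·yᵢ = q·xᵢ + q·(p̄ⱼ ∧ yⱼ), with payments given by
    -- (i) the componentwise min of liability and holdings
    (y11 + q2 * y12 = (0 + q2 * 2) + (min 0 y21 + q2 * min 1 y22)) ∧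
    (y21 + q2 * y22 = (2 + q2 * 0) + (min 1 y11 + q2 * min 0 y12)) ∧
    -- (iii) limited liability / absolute priority: solvent banks pay in full
    ((0 + q2 * 2) + (min 0 y21 + q2 * min 1 y22) ≥ 1 + q2 * 0 → y11 ≥ 1 ∧ y12 ≥ 0) ∧
    ((2 + q2 * 0) + (min 1 y11 + q2 * min 0 y12) ≥ 0 + q2 * 1 → y21 ≥ 0 ∧ y22 ≥ 1) := by
  intro y11 y12 y21 y22
  have hy12 : 0 ≤ y12 := le_max_right _ _
  have hy21 : 0 ≤ y21 := le_max_right _ _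
  have hpay2 : q2 * y22 = min q2 3 := mul_min_one_div hq2 3
  have hcap1 : min 1 (q2 * (2 + y22)) = y11 := by
    rw [mul_add, hpay2, mul_comm]
    exact min_one_two_mul_add_min q2
  have hcap2 : min q2 (2 + y11) = q2 * y22 := by
    rw [hpay2]
    exact min_two_add_min_one hq2.le
  have hval12 : q2 * y12 = max (q2 * (2 + y22) - 1) 0 := mul_max_sub_one_div hq2 _
  have hy11 : y11 ≤ 1 := min_le_left _ _
  have hy22 : y22 ≤ 1 := min_le_left _ _
  simp only [min_eq_left hy21, min_eq_left hy12, min_eq_right hy11, min_eq_right hy22]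
  refine ⟨⟨by positivity, hy12, hy21, by positivity⟩, ?_, ?_, fun h => ⟨?_, hy12⟩,
    fun h => ⟨hy21, ?_⟩⟩
  · rw [hval12, ← hcap1]
    linarith [min_add_max_sub_eq 1 (q2 * (2 + y22))]
  · rw [← hcap2]
    linarith [min_add_max_sub_eq q2 (2 + y11)]
  · rw [← hcap1]
    exact le_min le_rfl (by linarith)
  · have : q2 * 1 ≤ q2 * y22 := by
      rw [← hcap2]
      exact le_min (by linarith) (by linarith)
    exact le_of_mul_le_mul_left this hq2
end

section
/- Fix $q \in \mathbb{R}^m_{++}$ and consider the optimization $P(w) = \arg\max\{h(p) : p \in [0,\bar p],\ q^\mathsf{T} p \le w\}$ where $h: [0,\bar p] \to \mathbb{R}$ is strictly concave, strictly increasing, and supermodular, and $\bar p \in \mathbb{R}^m_+$. Then for every $w \ge 0$ the maximizer $P(w)$ exists and is unique, the map $w \mapsto P(w)$ is nondecreasing in $w$ (componentwise), and $P(w) = \bar p$ whenever $w \ge q^\mathsf{T} \bar p$. -/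
/-!
Existence comes from compactness of the budget set and uniqueness from strict concavity.
For monotonicity, let `p = P w`, `p' = P w'` with `w ≤ w'`, and write `c x = qᵀx`. Moving a
fraction `t` of the way from `p'` towards `p ⊓ p'`, and from `p` towards `p ⊔ p'`, lowers the
cost of the first mixture by exactly what it adds to the second, namely `t (c p' - c (p ⊓ p'))`,
because `c (x ⊓ y) + c (x ⊔ y) = c x + c y`. So `t` can be chosen to make the first mixture
affordable at `w` and the second at `w'`. By concavity and supermodularity the two mixtures
together are worth at least `h p + h p'`, hence the first one is also a maximizer at budget `w`.
By uniqueness it equals `p`, which exhibits `p` as a convex combination of `p ⊓ p' ≤ p'`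
and `p'`.
-/

open Set Matrix

lemma exists_mem_Icc_mul_mem_Icc {lo hi d : ℝ} (hd : 0 ≤ d) (hlo : lo ≤ d) (hhi : 0 ≤ hi)
    (hlohi : lo ≤ hi) : ∃ t ∈ Icc (0 : ℝ) 1, lo ≤ t * d ∧ t * d ≤ hi := by
  rcases hd.eq_or_lt with rfl | hd
  · exact ⟨0, ⟨le_rfl, zero_le_one⟩, by simpa using hlo, by simpa using hhi⟩
  · refine ⟨max 0 lo / d, ⟨by positivity, ?_⟩, ?_, ?_⟩
    · exact (div_le_one hd).2 (max_le hd.le hlo)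
    · rw [div_mul_cancel₀ _ hd.ne']; exact le_max_right _ _
    · rw [div_mul_cancel₀ _ hd.ne']; exact max_le hhi hlohi

section Budget

variable {E : Type*} [AddCommGroup E] [Module ℝ E]

def budgetSet (S : Set E) (c : E →ₗ[ℝ] ℝ) (w : ℝ) : Set E := S ∩ {x | c x ≤ w}

lemma Convex.budgetSet {S : Set E} (hS : Convex ℝ S) (c : E →ₗ[ℝ] ℝ) (w : ℝ) :
    Convex ℝ (budgetSet S c w) :=
  hS.inter (convex_halfSpace_le c.isLinear w)

variable [Lattice E] [AddLeftMono E] [PosSMulMono ℝ E]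

theorem le_of_isMaxOn_budgetSet {S : Set E} (hS : Convex ℝ S) (hSl : IsSublattice S)
    {c : E →ₗ[ℝ] ℝ} (hc : Monotone c) {h : E → ℝ} (hconc : StrictConcaveOn ℝ S h)
    (hsup : ∀ x ∈ S, ∀ y ∈ S, h x + h y ≤ h (x ⊔ y) + h (x ⊓ y))
    {w w' : ℝ} (hww' : w ≤ w') {p p' : E}
    (hp : p ∈ budgetSet S c w) (hpmax : IsMaxOn h (budgetSet S c w) p)
    (hp' : p' ∈ budgetSet S c w') (hp'max : IsMaxOn h (budgetSet S c w') p') : p ≤ p' := by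
  set a := p ⊓ p'
  set b := p ⊔ p'
  have ha : a ∈ S := hSl.infClosed hp.1 hp'.1
  have hb : b ∈ S := hSl.supClosed hp.1 hp'.1
  have hcab : c a + c b = c p + c p' := by rw [← map_add, inf_add_sup, map_add]
  have hpw : c p ≤ w := hp.2
  have hp'w : c p' ≤ w' := hp'.2
  obtain ⟨t, ⟨ht0, ht1⟩, hlo, hhi⟩ := exists_mem_Icc_mul_mem_Icc (d := c p' - c a)
    (lo := c p' - w) (hi := w' - c p) (sub_nonneg.2 (hc inf_le_right))
    (by linarith [hc (inf_le_left : a ≤ p)]) (by linarith) (by linarith)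
  set u := t • a + (1 - t) • p'
  set v := t • b + (1 - t) • p
  have hu : u ∈ budgetSet S c w := by
    refine ⟨hS ha hp'.1 ht0 (by linarith) (by ring), ?_⟩
    have hcu : c u = c p' - t * (c p' - c a) := by
      simp only [u, map_add, map_smul, smul_eq_mul]; ring
    show c u ≤ w
    linarith
  have hv : v ∈ budgetSet S c w' := by
    refine ⟨hS hb hp.1 ht0 (by linarith) (by ring), ?_⟩
    have hcv : c v = c p + t * (c p' - c a) := by
      simp only [v, map_add, map_smul, smul_eq_mul]; linear_combination t * hcab
    show c v ≤ w'
    linarith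
  have hhu : t * h a + (1 - t) * h p' ≤ h u :=
    hconc.concaveOn.2 ha hp'.1 ht0 (by linarith) (by ring)
  have hhv : t * h b + (1 - t) * h p ≤ h v :=
    hconc.concaveOn.2 hb hp.1 ht0 (by linarith) (by ring)
  have hsup_t : t * (h p + h p') ≤ t * (h b + h a) :=
    mul_le_mul_of_nonneg_left (hsup p hp.1 p' hp'.1) ht0
  have hvp' : h v ≤ h p' := hp'max hv
  have hpu : h p ≤ h u := by linarith
  have hup : u = p :=
    (hconc.subset inter_subset_left (hS.budgetSet c w)).eq_of_isMaxOn
      (fun z hz => (hpmax hz).trans hpu) hpmax hu hp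
  calc p = t • a + (1 - t) • p' := hup.symm
    _ ≤ t • p' + (1 - t) • p' := by gcongr; exact inf_le_right
    _ = p' := by rw [← add_smul]; simp

end Budget

lemma isSublattice_Icc {α : Type*} [Lattice α] (a b : α) : IsSublattice (Icc a b) :=
  ⟨fun _ hx _ hy => ⟨le_sup_of_le_left hx.1, sup_le hx.2 hy.2⟩,
    fun _ hx _ hy => ⟨le_inf hx.1 hy.1, inf_le_of_left_le hx.2⟩⟩

/-- Monotone comparative statics for the payment problem (cf. Quah, used in
Lemma 3.1): maximizing a continuous, strictly concave, strictly increasing,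
supermodular `h` over `[0, p̄] ∩ {qᵀp ≤ w}` has a unique maximizer `P(w)` for each
budget `w ≥ 0`; `P` is componentwise nondecreasing in `w`, and `P(w) = p̄` once
`w ≥ qᵀp̄`. -/
theorem stmt_19 (m : ℕ) (q : Fin m → ℝ) (hq : ∀ k, 0 < q k)
    (pbar : Fin m → ℝ) (hpbar : ∀ k, 0 ≤ pbar k)
    (h : (Fin m → ℝ) → ℝ)
    (hcont : ContinuousOn h (Set.Icc 0 pbar))
    (hconc : StrictConcaveOn ℝ (Set.Icc 0 pbar) h)
    (hmono : ∀ p p' : Fin m → ℝ, p ∈ Set.Icc 0 pbar → p' ∈ Set.Icc 0 pbar →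
      p ≤ p' → p ≠ p' → h p < h p')
    (hsup : ∀ p p' : Fin m → ℝ, p ∈ Set.Icc 0 pbar → p' ∈ Set.Icc 0 pbar →
      h p + h p' ≤ h (p ⊔ p') + h (p ⊓ p')) :
    ∃ P : ℝ → Fin m → ℝ,
      (∀ w, 0 ≤ w → P w ∈ Set.Icc 0 pbar ∧ (∑ k, q k * P w k) ≤ w ∧
        ∀ p ∈ Set.Icc 0 pbar, (∑ k, q k * p k) ≤ w → h p ≤ h (P w)) ∧
      (∀ w, 0 ≤ w → ∀ p ∈ Set.Icc 0 pbar, (∑ k, q k * p k) ≤ w →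
        (∀ p' ∈ Set.Icc 0 pbar, (∑ k, q k * p' k) ≤ w → h p' ≤ h p) → p = P w) ∧
      (∀ w w', 0 ≤ w → w ≤ w' → P w ≤ P w') ∧
      (∀ w, (∑ k, q k * pbar k) ≤ w → P w = pbar) := by
  set S := Icc (0 : Fin m → ℝ) pbar
  set c : (Fin m → ℝ) →ₗ[ℝ] ℝ := dotProductBilin ℝ ℝ q
  have hq₀ : 0 ≤ q := fun k => (hq k).le
  have hc : Monotone c := fun _ _ hxy => dotProduct_le_dotProduct_of_nonneg_left hxy hq₀
  have hexists (w : ℝ) (hw : 0 ≤ w) :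
      ∃ p ∈ budgetSet S c w, IsMaxOn h (budgetSet S c w) p :=
    (isCompact_Icc.inter_right (isClosed_le c.continuous_of_finiteDimensional
      continuous_const)).exists_isMaxOn ⟨0, ⟨le_rfl, hpbar⟩, by simpa using hw⟩
      (hcont.mono inter_subset_left)
  choose! P hP hPmax using hexists
  have hunique (w : ℝ) (hw : 0 ≤ w) (p : Fin m → ℝ) (hp : p ∈ budgetSet S c w)
      (hpmax : IsMaxOn h (budgetSet S c w) p) : p = P w :=
    (hconc.subset inter_subset_left ((convex_Icc 0 pbar).budgetSet c w)).eq_of_isMaxOn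
      hpmax (hPmax w hw) hp (hP w hw)
  refine ⟨P, fun w hw => ?_, fun w hw p hp hpc hpmax => ?_, fun w w' hw hww' => ?_,
    fun w hw => ?_⟩
  · exact ⟨(hP w hw).1, (hP w hw).2, fun p hp hpc => hPmax w hw ⟨hp, hpc⟩⟩
  · exact hunique w hw p ⟨hp, hpc⟩ fun z hz => hpmax z hz.1 hz.2
  · have hw' : 0 ≤ w' := hw.trans hww'
    exact le_of_isMaxOn_budgetSet (convex_Icc 0 pbar) (isSublattice_Icc 0 pbar) hc hconc
      (fun x hx y hy => hsup x y hx hy) hww' (hP w hw) (hPmax w hw) (hP w' hw') (hPmax w' hw')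
  · have hpbarS : pbar ∈ S := ⟨hpbar, le_rfl⟩
    have hpbar_max : IsMaxOn h (budgetSet S c w) pbar := fun z hz =>
      (eq_or_ne z pbar).elim (fun hz' => (congrArg h hz').le)
        fun hne => (hmono z pbar hz.1 hpbarS hz.1.2 hne).le
    have hw₀ : 0 ≤ w := (dotProduct_nonneg_of_nonneg hq₀ hpbar).trans hw
    exact (hunique w hw₀ pbar ⟨hpbarS, hw⟩ hpbar_max).symm
end
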